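/- arXiv:2506.14357 — 2 statements merged into one kernel-verified Lean document; each statement's English description precedes it below -/
import Mathlib

section
/- Let C be a conjugation on H, M a closed proper subspace of H, and V : M → H a bounded C-symmetric operator. Then the bounded operator W₀ on H defined by W₀ x = V(P_M x) + C(V*(C(P⊥ x))) is a C-self-adjoint extension of V. Moreover, W₀ = (1/2)(Ṽ_{Z̃₀} + C∘Ṽ_{Z̃₀}*∘C), where Z̃₀ : H → M⊥ is the bounded operator Z̃₀ x = P⊥(C(V(C(P_{C(M)} x)))) (with P_{C(M)} the orthogonal projection onto the closed subspace C(M)) and Ṽ_{Z̃₀} x = V(P_M x) + Z̃₀*(P⊥ x). -/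
local notation "⟪" x ", " y "⟫" => @inner ℂ _ _ x y

/-- A conjugation on a complex inner product space: additive, conjugate-homogeneous,
isometric and involutive. -/
def IsConjugation {H : Type*} [NormedAddCommGroup H] [InnerProductSpace ℂ H]
    (C : H → H) : Prop :=
  (∀ x y, C (x + y) = C x + C y) ∧
  (∀ (a : ℂ) (x : H), C (a • x) = (starRingEnd ℂ) a • C x) ∧
  (∀ x, ‖C x‖ = ‖x‖) ∧
  (∀ x, C (C x) = x)

section Aux
variable {H : Type*} [NormedAddCommGroup H] [InnerProductSpace ℂ H]

theorem IsConjugation.map_zero' {C : H → H} (hC : IsConjugation C) : C 0 = 0 := by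
  have := hC.2.1 0 0
  simpa using this

theorem IsConjugation.inner_conj {C : H → H} (hC : IsConjugation C) (x y : H) :
    ⟪C x, C y⟫ = ⟪y, x⟫ := by
  obtain ⟨hadd, hsmul, hnorm, hinv⟩ := hC
  have key : ∀ a b : H, (⟪C a, C b⟫).re = (⟪a, b⟫).re := by
    intro a b
    have h1 : ‖C a + C b‖ ^ 2 = ‖a + b‖ ^ 2 := by rw [← hadd, hnorm]
    rw [@norm_add_sq ℂ H _ _ _ (C a) (C b), @norm_add_sq ℂ H _ _ _ a b, hnorm, hnorm] at h1
    simp only [RCLike.re_to_complex] at h1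
    linarith
  have hre := key x y
  have him : (⟪C x, C y⟫).im = -(⟪x, y⟫).im := by
    have h1 := key x (Complex.I • y)
    have h2 : C (Complex.I • y) = -(Complex.I • C y) := by
      rw [hsmul]; simp [Complex.conj_I]
    rw [h2, inner_neg_right, inner_smul_right, inner_smul_right] at h1
    simp only [Complex.conj_I, Complex.neg_re, Complex.mul_re, Complex.neg_im,
      Complex.I_re, Complex.I_im, Complex.neg_im] at h1
    ring_nf at h1 ⊢
    linarith
  have : ⟪y, x⟫ = (starRingEnd ℂ) ⟪x, y⟫ := (inner_conj_symm y x).symm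
  rw [this]
  exact Complex.ext (by rw [Complex.conj_re]; exact hre) (by rw [Complex.conj_im]; exact him)

theorem IsConjugation.inner_swap {C : H → H} (hC : IsConjugation C) (a b : H) :
    ⟪C a, b⟫ = ⟪C b, a⟫ := by
  conv_lhs => rw [← hC.2.2.2 b]
  rw [hC.inner_conj]

noncomputable def IsConjugation.compCLM {H E : Type*}
    [NormedAddCommGroup H] [InnerProductSpace ℂ H]
    [NormedAddCommGroup E] [InnerProductSpace ℂ E]
    {C : H → H} {D : E → E} (hC : IsConjugation C) (hD : IsConjugation D)
    (B : H →L[ℂ] E) : H →L[ℂ] E :=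
  LinearMap.mkContinuous
    { toFun := fun x => D (B (C x))
      map_add' := fun x y => by simp only [hC.1, map_add, hD.1]
      map_smul' := fun a x => by
        simp only [hC.2.1, map_smul, hD.2.1, RingHom.id_apply]
        simp }
    ‖B‖ (fun x => by
      show ‖D (B (C x))‖ ≤ ‖B‖ * ‖x‖
      rw [hD.2.2.1]
      calc ‖B (C x)‖ ≤ ‖B‖ * ‖C x‖ := B.le_opNorm _
        _ = ‖B‖ * ‖x‖ := by rw [hC.2.2.1])

@[simp] theorem IsConjugation.compCLM_apply {H E : Type*}
    [NormedAddCommGroup H] [InnerProductSpace ℂ H]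
    [NormedAddCommGroup E] [InnerProductSpace ℂ E]
    {C : H → H} {D : E → E} (hC : IsConjugation C) (hD : IsConjugation D)
    (B : H →L[ℂ] E) (x : H) : hC.compCLM hD B x = D (B (C x)) := rfl

end Aux

/-- `W₀ x = V(P_M x) + C(V*(C(P⊥ x)))` is a `C`-self-adjoint extension of `V`,
and `W₀ = (Ṽ_{Z̃₀} + C Ṽ_{Z̃₀}* C)/2` where `Z̃₀ x = P⊥(C(V(C(P_{C(M)} x))))` and
`Ṽ_{Z̃₀} = V P_M + Z̃₀* P⊥`.  Here `CM` is the closed subspace `C(M)` of `H` and `hmem`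
records that `C(P_{C(M)} x) ∈ M` for all `x`. -/
theorem stmt_7 {H : Type*} [NormedAddCommGroup H] [InnerProductSpace ℂ H] [CompleteSpace H]
    (C : H → H) (hC : IsConjugation C)
    (M : Submodule ℂ H) [CompleteSpace M] (hproper : M ≠ ⊤)
    (V : M →L[ℂ] H)
    (hV : ∀ x y : M, ⟪C (y : H), V x⟫ = ⟪C (V y), (x : H)⟫)
    (CM : Submodule ℂ H) [CompleteSpace CM]
    (hCM : (CM : Set H) = C '' (M : Set H))
    (hmem : ∀ x : H, C ((Submodule.orthogonalProjectionOnto CM x : H)) ∈ M)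
    (Z : H →L[ℂ] Mᗮ)
    (hZ : ∀ x : H, Z x = Submodule.orthogonalProjectionOnto Mᗮ
        (C (V ⟨C ((Submodule.orthogonalProjectionOnto CM x : H)), hmem x⟩))) :
    ∃ W₀ : H →L[ℂ] H,
      (∀ x, W₀ x = V (Submodule.orthogonalProjectionOnto M x)
          + C ((ContinuousLinearMap.adjoint V
              (C ((Submodule.orthogonalProjectionOnto Mᗮ x : H))) : H))) ∧
      (∀ h : M, W₀ h = V h) ∧
      (∀ x, W₀ x = C (ContinuousLinearMap.adjoint W₀ (C x))) ∧
      (∀ x, W₀ x = (2⁻¹ : ℂ) •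
        ((V ∘L Submodule.orthogonalProjectionOnto M
            + ContinuousLinearMap.adjoint Z ∘L Submodule.orthogonalProjectionOnto Mᗮ) x
          + C (ContinuousLinearMap.adjoint
              (V ∘L Submodule.orthogonalProjectionOnto M
                + ContinuousLinearMap.adjoint Z ∘L Submodule.orthogonalProjectionOnto Mᗮ) (C x)))) := by
  have hadd := hC.1
  have hsmul := hC.2.1
  have hinv := hC.2.2.2
  have hci := hC.inner_conj
  have hswap := hC.inner_swap
  set A : H →L[ℂ] M := ContinuousLinearMap.adjoint V with hA
  set B : H →L[ℂ] H := M.subtypeL ∘L A with hB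
  set CBC : H →L[ℂ] H := hC.compCLM hC B with hCBCdef
  set W : H →L[ℂ] H :=
    V ∘L Submodule.orthogonalProjectionOnto M + CBC ∘L (Mᗮ.subtypeL ∘L Submodule.orthogonalProjectionOnto Mᗮ) with hWdef
  have hWapp : ∀ x : H, W x = V (Submodule.orthogonalProjectionOnto M x)
      + C ((A (C ((Submodule.orthogonalProjectionOnto Mᗮ x : H))) : H)) := by
    intro x
    simp [hWdef, hCBCdef, hB]
  -- inner product helpers
  have hinM : ∀ (m : M) (v : H),
      ⟪(m : H), v⟫ = ⟪(m : H), ((Submodule.orthogonalProjectionOnto M v : H))⟫ := by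
    intro m v
    have h0 : ⟪(m : H), v - ↑(Submodule.orthogonalProjectionOnto M v)⟫ = 0 :=
      (Submodule.mem_orthogonal M _).1 (Submodule.sub_starProjection_mem_orthogonal v) _ m.2
    rw [inner_sub_right, sub_eq_zero] at h0
    exact h0.symm ▸ h0
  have hinM' : ∀ (v : H) (m : M),
      ⟪v, (m : H)⟫ = ⟪((Submodule.orthogonalProjectionOnto M v : H)), (m : H)⟫ := by
    intro v m
    have h0 : ⟪v - ↑(Submodule.orthogonalProjectionOnto M v), (m : H)⟫ = 0 :=
      (Submodule.mem_orthogonal' M _).1 (Submodule.sub_starProjection_mem_orthogonal v) _ m.2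
    rw [inner_sub_left, sub_eq_zero] at h0
    exact h0
  have hinQ : ∀ (q : Mᗮ) (a : H),
      ⟪(q : H), a⟫ = ⟪(q : H), ((Submodule.orthogonalProjectionOnto Mᗮ a : H))⟫ := by
    intro q a
    have h0 : ⟪(q : H), a - ↑(Submodule.orthogonalProjectionOnto Mᗮ a)⟫ = 0 :=
      (Submodule.mem_orthogonal Mᗮ _).1 (Submodule.sub_starProjection_mem_orthogonal a) _ q.2
    rw [inner_sub_right, sub_eq_zero] at h0
    exact h0
  -- expansion of the form
  have hexp : ∀ s v : H, ⟪C v, W s⟫ =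
      ⟪C (V (Submodule.orthogonalProjectionOnto M v)), ((Submodule.orthogonalProjectionOnto M s : H))⟫
      + ⟪C ((Submodule.orthogonalProjectionOnto Mᗮ v : H)), V (Submodule.orthogonalProjectionOnto M s)⟫
      + ⟪C ((Submodule.orthogonalProjectionOnto Mᗮ s : H)), V (Submodule.orthogonalProjectionOnto M v)⟫ := by
    intro s v
    rw [hWapp, inner_add_right]
    have t2 : ⟪C v, C ((A (C ((Submodule.orthogonalProjectionOnto Mᗮ s : H))) : H))⟫
        = ⟪C ((Submodule.orthogonalProjectionOnto Mᗮ s : H)), V (Submodule.orthogonalProjectionOnto M v)⟫ := by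
      rw [hci, hinM, ← Submodule.coe_inner, ContinuousLinearMap.adjoint_inner_left]
    have t1 : ⟪C v, V (Submodule.orthogonalProjectionOnto M s)⟫
        = ⟪C (V (Submodule.orthogonalProjectionOnto M v)), ((Submodule.orthogonalProjectionOnto M s : H))⟫
          + ⟪C ((Submodule.orthogonalProjectionOnto Mᗮ v : H)), V (Submodule.orthogonalProjectionOnto M s)⟫ := by
      conv_lhs => rw [← Submodule.starProjection_add_starProjection_orthogonal (K := M) v,
        Submodule.starProjection_apply, Submodule.starProjection_apply]
      rw [hadd, inner_add_left, hV]
    rw [t1, t2]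
  have hsym1 : ∀ s v : H,
      ⟪C (V (Submodule.orthogonalProjectionOnto M v)), ((Submodule.orthogonalProjectionOnto M s : H))⟫
      = ⟪C (V (Submodule.orthogonalProjectionOnto M s)), ((Submodule.orthogonalProjectionOnto M v : H))⟫ := by
    intro s v
    rw [← hV, hswap]
  have hWsym : ∀ s v : H, ⟪C v, W s⟫ = ⟪C s, W v⟫ := by
    intro s v
    rw [hexp, hexp, hsym1 s v]
    ring
  -- C-self-adjointness
  have hadjW : hC.compCLM hC W = ContinuousLinearMap.adjoint W := by
    rw [ContinuousLinearMap.eq_adjoint_iff]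
    intro u v
    rw [IsConjugation.compCLM_apply, hswap, hWsym (C u) v, hinv]
  have h3 : ∀ x : H, W x = C (ContinuousLinearMap.adjoint W (C x)) := by
    intro x
    rw [← hadjW, IsConjugation.compCLM_apply, hinv, hinv]
  -- projection onto CM
  have hprojCM : ∀ v : H,
      ((Submodule.orthogonalProjectionOnto CM (C v) : H)) = C ((Submodule.orthogonalProjectionOnto M v : H)) := by
    intro v
    apply Submodule.eq_starProjection_of_mem_of_inner_eq_zero
    · rw [← SetLike.mem_coe, hCM]
      exact ⟨_, (Submodule.orthogonalProjectionOnto M v).2, rfl⟩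
    · intro w hw
      rw [← SetLike.mem_coe, hCM] at hw
      obtain ⟨m, hm, rfl⟩ := hw
      have hd : C v - C ((Submodule.orthogonalProjectionOnto M v : H))
          = C ((Submodule.orthogonalProjectionOnto Mᗮ v : H)) := by
        rw [sub_eq_iff_eq_add, ← hadd,
          add_comm, Submodule.coe_orthogonalProjectionOnto_apply, Submodule.coe_orthogonalProjectionOnto_apply,
          Submodule.starProjection_add_starProjection_orthogonal]
      rw [hd, hci]
      exact (Submodule.mem_orthogonal M _).1 (Submodule.orthogonalProjectionOnto Mᗮ v).2 m hm
  have hZ' : ∀ v : H, (Z v : H)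
      = ((Submodule.orthogonalProjectionOnto Mᗮ (C (V (Submodule.orthogonalProjectionOnto M (C v)))) : H)) := by
    intro v
    rw [hZ]
    have he : (⟨C ((Submodule.orthogonalProjectionOnto CM v : H)), hmem v⟩ : M)
        = Submodule.orthogonalProjectionOnto M (C v) := by
      apply Subtype.ext
      show C ((Submodule.orthogonalProjectionOnto CM v : H)) = _
      conv_lhs => rw [← hinv v]
      rw [hprojCM, hinv]
    rw [he]
  -- adjoint of Z
  have hK : CBC ∘L Mᗮ.subtypeL = ContinuousLinearMap.adjoint Z := by
    rw [ContinuousLinearMap.eq_adjoint_iff]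
    intro q v
    rw [ContinuousLinearMap.comp_apply, Submodule.subtypeL_apply, hCBCdef,
      IsConjugation.compCLM_apply]
    have lhs1 : ⟪C ((B (C (q : H)))), v⟫ = ⟪(q : H), C (V (Submodule.orthogonalProjectionOnto M (C v)))⟫ := by
      rw [hswap]
      have hbc : (B (C (q : H))) = ((A (C (q : H)) : M) : H) := rfl
      rw [hbc, hinM', ← Submodule.coe_inner, ContinuousLinearMap.adjoint_inner_right]
      conv_lhs => rw [← hinv (V (Submodule.orthogonalProjectionOnto M (C v)))]
      rw [hci]
    rw [lhs1, Submodule.coe_inner, hZ' v, ← hinQ]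
  -- identify the operator in part 4 with W
  have hVt : V ∘L Submodule.orthogonalProjectionOnto M
      + ContinuousLinearMap.adjoint Z ∘L Submodule.orthogonalProjectionOnto Mᗮ = W := by
    rw [← hK, hWdef, ContinuousLinearMap.comp_assoc]
  refine ⟨W, hWapp, ?_, h3, ?_⟩
  · intro h
    rw [hWapp]
    rw [Submodule.orthogonalProjectionOnto_mem_subspace_eq_self,
      Submodule.orthogonalProjectionOnto_apply_of_mem_orthogonal (K := Mᗮ) (M.le_orthogonal_orthogonal h.2)]
    simp [hC.map_zero']
  · intro x
    rw [hVt, ← h3 x, ← two_smul ℂ, smul_smul]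
    norm_num
end

section
/- Let C be a conjugation on H, M a closed subspace of H whose orthogonal complement M⊥ is one-dimensional, and V : M → H a C-symmetric contraction. If K̃ : M⊥ → H is a contraction with range contained in 𝔇_{V*} satisfying K̃*(D_{V*}(C h)) = P⊥(C(V h)) for all h ∈ M, then the contractive extension Ṽ_{K̃} of V defined by Ṽ_{K̃} x = V(P_M x) + D_{V*}(K̃(P⊥ x)) is itself C-self-adjoint. -/
local notation "⟪" x ", " y "⟫" => @inner ℂ _ _ x y

lemma conj_inner' {H : Type*} [NormedAddCommGroup H] [InnerProductSpace ℂ H]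
    {C : H → H} (hC : IsConjugation C) (x y : H) : ⟪C x, C y⟫ = ⟪y, x⟫ := by
  obtain ⟨hadd, hsmul, hnorm, hinv⟩ := hC
  have hsub : ∀ a b, C (a - b) = C a - C b := by
    intro a b
    have := hadd (a - b) b
    rw [sub_add_cancel] at this
    rw [eq_sub_iff_add_eq, ← this]
  have hI : (RCLike.I : ℂ) = Complex.I := rfl
  rw [inner_eq_sum_norm_sq_div_four (𝕜 := ℂ) (C x) (C y), inner_eq_sum_norm_sq_div_four (𝕜 := ℂ) y x]
  have n1 : ‖C x + C y‖ = ‖y + x‖ := by rw [← hadd, hnorm, add_comm]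
  have n2 : ‖C x - C y‖ = ‖y - x‖ := by rw [← hsub, hnorm, norm_sub_rev]
  have n3 : ‖C x - (RCLike.I : ℂ) • C y‖ = ‖y - (RCLike.I : ℂ) • x‖ := by
    have : C x - (RCLike.I : ℂ) • C y = C (x + (RCLike.I : ℂ) • y) := by
      rw [hadd, hsmul, hI, Complex.conj_I, neg_smul, ← sub_eq_add_neg]
    rw [this, hnorm]
    have : y - (RCLike.I : ℂ) • x = (-(RCLike.I : ℂ)) • (x + (RCLike.I : ℂ) • y) := by
      rw [smul_add, smul_smul, hI, neg_mul, Complex.I_mul_I, neg_neg, one_smul,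
        neg_smul, neg_add_eq_sub]
    rw [this, norm_smul]
    simp [hI]
  have n4 : ‖C x + (RCLike.I : ℂ) • C y‖ = ‖y + (RCLike.I : ℂ) • x‖ := by
    have : C x + (RCLike.I : ℂ) • C y = C (x - (RCLike.I : ℂ) • y) := by
      rw [hsub, hsmul, hI, Complex.conj_I, neg_smul, sub_neg_eq_add]
    rw [this, hnorm]
    have : y + (RCLike.I : ℂ) • x = (RCLike.I : ℂ) • (x - (RCLike.I : ℂ) • y) := by
      rw [smul_sub, smul_smul, hI, Complex.I_mul_I, neg_smul, one_smul, sub_neg_eq_add,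
        add_comm]
    rw [this, norm_smul]
    simp [hI]
  rw [n1, n2, n3, n4]

lemma conj_inner_flip' {H : Type*} [NormedAddCommGroup H] [InnerProductSpace ℂ H]
    {C : H → H} (hC : IsConjugation C) (x y : H) : ⟪C x, y⟫ = ⟪C y, x⟫ := by
  conv_lhs => rw [← hC.2.2.2 y]
  exact conj_inner' hC x (C y)

/-- if `M⊥` is one-dimensional and `K̃* ⊇ X₀` (i.e.
`K̃*(D_{V*}(C h)) = P⊥(C(V h))` for all `h ∈ M`), then the contractive extension
`Ṽ_{K̃} x = V(P_M x) + D_{V*}(K̃(P⊥ x))` of `V` is itself `C`-self-adjoint. -/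
theorem stmt_13 {H : Type*} [NormedAddCommGroup H] [InnerProductSpace ℂ H] [CompleteSpace H]
    (C : H → H) (hC : IsConjugation C)
    (M : Submodule ℂ H) [CompleteSpace M]
    (hdim : Module.finrank ℂ (Mᗮ : Submodule ℂ H) = 1)
    (V : M →L[ℂ] H)
    (hV : ∀ x y : M, ⟪C (y : H), V x⟫ = ⟪C (V y), (x : H)⟫)
    (hVc : ‖V‖ ≤ 1)
    (D : H →L[ℂ] H) (hD : D.IsPositive)
    (hD2 : D ∘L D = ContinuousLinearMap.id ℂ H - V ∘L ContinuousLinearMap.adjoint V)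
    (K : Mᗮ →L[ℂ] H) (hKc : ‖K‖ ≤ 1)
    (hKran : ∀ f : Mᗮ, K f ∈ closure (LinearMap.range (D : H →ₗ[ℂ] H) : Set H))
    (hKX : ∀ h : M, ((ContinuousLinearMap.adjoint K (D (C (h : H))) : H))
        = ((Submodule.orthogonalProjectionOnto Mᗮ (C (V h)) : H)))
    (W : H →L[ℂ] H)
    (hW : ∀ x, W x = V (Submodule.orthogonalProjectionOnto M x) + D (K (Submodule.orthogonalProjectionOnto Mᗮ x))) :
    ∀ x, W x = C (ContinuousLinearMap.adjoint W (C x)) := by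
  have hDadj : ContinuousLinearMap.adjoint D = D :=
    ContinuousLinearMap.isSelfAdjoint_iff'.mp hD.isSelfAdjoint
  -- cross term identity
  have cross : ∀ (k : M) (f : Mᗮ), ⟪C (k : H), D (K f)⟫ = ⟪C (f : H), (V k : H)⟫ := by
    intro k f
    have s1 := ContinuousLinearMap.adjoint_inner_left D (K f) (C (k : H))
    rw [hDadj] at s1
    have s2 : ⟪D (C (k : H)), (K f : H)⟫
        = ⟪((ContinuousLinearMap.adjoint K (D (C (k : H)))) : H), (f : H)⟫ := by
      rw [← Submodule.coe_inner]
      exact (ContinuousLinearMap.adjoint_inner_left K f (D (C (k : H)))).symm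
    have s3 : ⟪((Submodule.orthogonalProjectionOnto Mᗮ (C (V k))) : H), (f : H)⟫ = ⟪C (V k), (f : H)⟫ := by
      have horth : C (V k) - ((Submodule.orthogonalProjectionOnto Mᗮ (C (V k))) : H) ∈ Mᗮᗮ :=
        Submodule.sub_starProjection_mem_orthogonal (K := Mᗮ) (C (V k))
      have h0 := Submodule.inner_left_of_mem_orthogonal f.2 horth
      rw [inner_sub_left, sub_eq_zero] at h0
      exact h0.symm
    rw [← s1, s2, hKX k, s3]
    exact conj_inner_flip' hC (V k) (f : H)
  -- one-dimensionality
  obtain ⟨e, he0, he⟩ := finrank_eq_one_iff'.mp hdim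
  have odt : ∀ f g : Mᗮ, ⟪C (g : H), D (K f)⟫ = ⟪C (f : H), D (K g)⟫ := by
    intro f g
    obtain ⟨c, hc⟩ := he f
    obtain ⟨d, hd⟩ := he g
    rw [← hc, ← hd]
    simp only [Submodule.coe_smul, hC.2.1, map_smul, inner_smul_left, inner_smul_right,
      starRingEnd_self_apply]
    ring
  have t1 : ∀ h k : M, ⟪C (k : H), (V h : H)⟫ = ⟪C (h : H), (V k : H)⟫ := by
    intro h k
    rw [hV h k]
    exact conj_inner_flip' hC (V k : H) (h : H)
  -- key symmetry
  have key : ∀ x y : H, ⟪C y, W x⟫ = ⟪C x, W y⟫ := by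
    intro x y
    have hx : (Submodule.orthogonalProjectionOnto M x : H) + (Submodule.orthogonalProjectionOnto Mᗮ x : H) = x :=
      Submodule.starProjection_add_starProjection_orthogonal (K := M) x
    have hy : (Submodule.orthogonalProjectionOnto M y : H) + (Submodule.orthogonalProjectionOnto Mᗮ y : H) = y :=
      Submodule.starProjection_add_starProjection_orthogonal (K := M) y
    rw [hW x, hW y]
    conv_lhs => rw [← hy]
    conv_rhs => rw [← hx]
    rw [hC.1, hC.1, inner_add_left, inner_add_left, inner_add_right, inner_add_right,
      inner_add_right, inner_add_right]
    rw [t1 (Submodule.orthogonalProjectionOnto M x) (Submodule.orthogonalProjectionOnto M y),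
      cross (Submodule.orthogonalProjectionOnto M y) (Submodule.orthogonalProjectionOnto Mᗮ x),
      ← cross (Submodule.orthogonalProjectionOnto M x) (Submodule.orthogonalProjectionOnto Mᗮ y),
      odt (Submodule.orthogonalProjectionOnto Mᗮ x) (Submodule.orthogonalProjectionOnto Mᗮ y)]
    ring
  -- conclusion
  intro x
  have : C (W x) = ContinuousLinearMap.adjoint W (C x) := by
    apply ext_inner_left ℂ
    intro v
    rw [ContinuousLinearMap.adjoint_inner_right]
    calc ⟪v, C (W x)⟫ = ⟪C (C v), C (W x)⟫ := by rw [hC.2.2.2]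
      _ = ⟪W x, C v⟫ := conj_inner' hC (C v) (W x)
      _ = (starRingEnd ℂ) ⟪C v, W x⟫ := (inner_conj_symm _ _).symm
      _ = (starRingEnd ℂ) ⟪C x, W v⟫ := by rw [key x v]
      _ = ⟪W v, C x⟫ := inner_conj_symm _ _
  rw [← this, hC.2.2.2]
end
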